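/- arXiv:1908.04764 — 2 statements merged into one kernel-verified Lean document; each statement's English description precedes it below -/
import Mathlib

section
/- For nonzero complex x and y satisfying the dispersion equation x + x⁻¹ + y + y⁻¹ - 4 + K² = 0, one has (x(y - y⁻¹))² = (x - η₁,₁)(x - η₁,₂)(x - η₂,₁)(x - η₂,₂), where η₁,₁, η₂,₁ are the roots of x² + (K²-2)x + 1 = 0 and η₁,₂, η₂,₂ are the roots of x² + (K²-6)x + 1 = 0. -/
/-- For nonzero x, y on the dispersion curve x + x⁻¹ + y + y⁻¹ - 4 + K² = 0,
(x(y - y⁻¹))² = (x - η₁₁)(x - η₁₂)(x - η₂₁)(x - η₂₂), where η₁₁, η₂₁ are the roots of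
x² + (K²-2)x + 1 and η₁₂, η₂₂ are the roots of x² + (K²-6)x + 1. -/
theorem stmt_4 (K x y η11 η21 η12 η22 : ℂ) (hx : x ≠ 0) (hy : y ≠ 0)
    (hD : x + x⁻¹ + y + y⁻¹ - 4 + K ^ 2 = 0)
    (h1 : ∀ t : ℂ, t ^ 2 + (K ^ 2 - 2) * t + 1 = (t - η11) * (t - η21))
    (h2 : ∀ t : ℂ, t ^ 2 + (K ^ 2 - 6) * t + 1 = (t - η12) * (t - η22)) :
    (x * (y - y⁻¹)) ^ 2 = (x - η11) * (x - η12) * (x - η21) * (x - η22) := by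
  have hu : x * x⁻¹ = 1 := mul_inv_cancel₀ hx
  have hv : y * y⁻¹ = 1 := mul_inv_cancel₀ hy
  have hs : y + y⁻¹ = 4 - K ^ 2 - x - x⁻¹ := by linear_combination hD
  have hsq : (x * (y - y⁻¹)) ^ 2 = x ^ 2 * ((y + y⁻¹) ^ 2 - 4) := by
    linear_combination (-4 * x ^ 2) * hv
  rw [hsq, hs]
  have e1 := h1 x
  have e2 := h2 x
  have key : x ^ 2 * ((4 - K ^ 2 - x - x⁻¹) ^ 2 - 4)
      = (x ^ 2 + (K ^ 2 - 2) * x + 1) * (x ^ 2 + (K ^ 2 - 6) * x + 1) := by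
    field_simp
    ring
  linear_combination key + (x ^ 2 + (K ^ 2 - 6) * x + 1) * e1 + (x - η11) * (x - η21) * e2
end

section
/- Define u(m) = (1/(2πi))∮_{|x|=1} xᵐ/z(x) dx where z is holomorphic and nonvanishing on a neighborhood of the unit circle with z² = x⁴ + a₃x³ + a₂x² + a₁x + a₀. Then for every integer m ≥ 0: -(m+2)u(m+3) = (m+3/2)a₃·u(m+2) + (m+1)a₂·u(m+1) + (m+1/2)a₁·u(m) + m·a₀·u(m-1). -/
/-!
Where `z² = p`, differentiating gives `2 z z' = p'`, so
`(xᵐ z)' = m xᵐ⁻¹ z + xᵐ z' = xᵐ⁻¹ (m p + x p' / 2) / z`.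
For the monic quartic `p` the right-hand side is the combination
`(m+2) xᵐ⁺³/z + (m+3/2) a₃ xᵐ⁺²/z + (m+1) a₂ xᵐ⁺¹/z + (m+1/2) a₁ xᵐ/z + m a₀ xᵐ⁻¹/z`,
and the integral of an exact derivative over the closed unit circle vanishes.
-/

open Complex Metric Filter Topology

theorem circleIntegrable_zpow_div {z : ℂ → ℂ} {R : ℝ} (hR : 0 < R)
    (hz : ContinuousOn z (sphere 0 R)) (hz0 : ∀ x ∈ sphere (0 : ℂ) R, z x ≠ 0) (k : ℤ) :
    CircleIntegrable (fun x => x ^ k / z x) 0 R := by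
  refine ContinuousOn.circleIntegrable hR.le (ContinuousOn.div ?_ hz hz0)
  exact fun x hx =>
    (continuousAt_zpow₀ x k (Or.inl (ne_of_mem_sphere hx hR.ne'))).continuousWithinAt

theorem HasDerivAt.two_mul_mul_eq_of_sq_eventuallyEq {z p : ℂ → ℂ} {z' p' x : ℂ}
    (hz : HasDerivAt z z' x) (hp : HasDerivAt p p' x) (hsq : (fun y => z y ^ 2) =ᶠ[𝓝 x] p) :
    2 * z x * z' = p' := by
  refine HasDerivAt.unique ?_ hp
  convert (hz.pow 2).congr_of_eventuallyEq hsq.symm using 1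
  push_cast
  ring

theorem HasDerivAt.zpow_mul_of_sq_eventuallyEq {z p : ℂ → ℂ} {p' x : ℂ} (m : ℤ)
    (hz : DifferentiableAt ℂ z x) (hzx : z x ≠ 0) (hx : x ≠ 0)
    (hp : HasDerivAt p p' x) (hsq : (fun y => z y ^ 2) =ᶠ[𝓝 x] p) :
    HasDerivAt (fun y => y ^ m * z y) (x ^ (m - 1) * (m * p x + x * p' / 2) / z x) x := by
  have hzz' := hz.hasDerivAt.two_mul_mul_eq_of_sq_eventuallyEq hp hsq
  have hxm : x ^ m = x ^ (m - 1) * x := by rw [← zpow_add_one₀ hx, sub_add_cancel]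
  refine ((hasDerivAt_zpow m x (Or.inl hx)).mul hz.hasDerivAt).congr_deriv ?_
  rw [← hsq.eq_of_nhds, ← hzz', eq_div_iff hzx, hxm]
  ring

theorem hasDerivAt_quartic (a₀ a₁ a₂ a₃ x : ℂ) :
    HasDerivAt (fun y => y ^ 4 + a₃ * y ^ 3 + a₂ * y ^ 2 + a₁ * y + a₀)
      (4 * x ^ 3 + 3 * a₃ * x ^ 2 + 2 * a₂ * x + a₁) x := by
  refine ((((hasDerivAt_pow 4 x).add ((hasDerivAt_pow 3 x).const_mul a₃)).add
    ((hasDerivAt_pow 2 x).const_mul a₂)).add ((hasDerivAt_id x).const_mul a₁)).add_const a₀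
    |>.congr_deriv ?_
  push_cast
  ring

theorem HasDerivAt.zpow_mul_of_sq_eventuallyEq_quartic {z : ℂ → ℂ} {a₀ a₁ a₂ a₃ x : ℂ}
    (m : ℤ) (hz : DifferentiableAt ℂ z x) (hzx : z x ≠ 0) (hx : x ≠ 0)
    (hsq : (fun y => z y ^ 2) =ᶠ[𝓝 x]
      fun y => y ^ 4 + a₃ * y ^ 3 + a₂ * y ^ 2 + a₁ * y + a₀) :
    HasDerivAt (fun y => y ^ m * z y)
      ((m + 2) * (x ^ (m + 3) / z x) + (m + 3 / 2) * a₃ * (x ^ (m + 2) / z x)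
        + (m + 1) * a₂ * (x ^ (m + 1) / z x) + (m + 1 / 2) * a₁ * (x ^ m / z x)
        + m * a₀ * (x ^ (m - 1) / z x)) x := by
  refine (HasDerivAt.zpow_mul_of_sq_eventuallyEq m hz hzx hx
    (hasDerivAt_quartic a₀ a₁ a₂ a₃ x) hsq).congr_deriv ?_
  simp only [zpow_add₀ hx, zpow_sub₀ hx, zpow_ofNat]
  field_simp
  ring

/-- Define u(m) = (1/(2πi))∮_{|x|=1} xᵐ/z(x) dx where z is holomorphic and
nonvanishing on a neighborhood of the unit circle with z² = x⁴ + a₃x³ + a₂x² + a₁x + a₀.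
Then for every m ≥ 0:
-(m+2)u(m+3) = (m+3/2)a₃u(m+2) + (m+1)a₂u(m+1) + (m+1/2)a₁u(m) + m·a₀u(m-1). -/
theorem stmt_10 (a₀ a₁ a₂ a₃ : ℂ) (z : ℂ → ℂ) (U : Set ℂ)
    (hU : IsOpen U) (hsphere : Metric.sphere (0 : ℂ) 1 ⊆ U)
    (hz : DifferentiableOn ℂ z U)
    (hz0 : ∀ x ∈ U, z x ≠ 0)
    (hzsq : ∀ x ∈ U, (z x) ^ 2 = x ^ 4 + a₃ * x ^ 3 + a₂ * x ^ 2 + a₁ * x + a₀)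
    (u : ℤ → ℂ)
    (hu : ∀ m : ℤ, u m = (2 * Real.pi * I)⁻¹ * ∮ x in C(0, 1), x ^ m / z x) :
    ∀ m : ℤ, 0 ≤ m →
      -(m + 2) * u (m + 3) = (m + 3 / 2) * a₃ * u (m + 2) + (m + 1) * a₂ * u (m + 1)
        + (m + 1 / 2) * a₁ * u m + m * a₀ * u (m - 1) := by
  intro m _
  have hintegrable (k : ℤ) : CircleIntegrable (fun x => x ^ k / z x) 0 1 :=
    circleIntegrable_zpow_div one_pos (hz.continuousOn.mono hsphere)
      (fun x hx => hz0 x (hsphere hx)) k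
  have hexact := circleIntegral.integral_eq_zero_of_hasDerivWithinAt zero_le_one fun x hx =>
    have hxU : x ∈ U := hsphere hx
    (HasDerivAt.zpow_mul_of_sq_eventuallyEq_quartic m (hz.differentiableAt (hU.mem_nhds hxU))
      (hz0 x hxU) (ne_of_mem_sphere hx one_ne_zero)
      (eventually_of_mem (hU.mem_nhds hxU) hzsq)).hasDerivWithinAt
  rw [circleIntegral.integral_add, circleIntegral.integral_add, circleIntegral.integral_add,
    circleIntegral.integral_add] at hexact
  · simp only [circleIntegral.integral_const_mul] at hexact
    simp only [hu]
    linear_combination (-(2 * (Real.pi : ℂ) * I)⁻¹) * hexact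
  all_goals
    repeat' apply CircleIntegrable.add
    all_goals exact (hintegrable _).const_smul
end
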